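/- arXiv:2604.17027 — 2 statements merged into one kernel-verified Lean document; each statement's English description precedes it below -/
import Mathlib

section
/- Let Q : ℝ⁴ → ℝ⁴ be given by Q(x) = (0, −x₁x₃, 2x₁x₂, 0) (the nonlinearity of the modified Lorenz–Stenflo system). Then for every symmetric matrix P of the form P = [[p₁₁, 0, 0, p₁₄], [0, 2p₃₃, 0, 0], [0, 0, p₃₃, 0], [p₁₄, 0, 0, p₄₄]] with p₁₁, p₁₄, p₃₃, p₄₄ ∈ ℝ, one has xᵀ P Q(x) = 0 for all x ∈ ℝ⁴. -/
open Matrix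

/-- The nonlinearity of the modified Lorenz–Stenflo system, `Q(x) = (0, −x₁x₃, 2x₁x₂, 0)`. -/
def mlsQ (x : Fin 4 → ℝ) : Fin 4 → ℝ := ![0, -(x 0 * x 2), 2 * x 0 * x 1, 0]

theorem stmt_4 (p11 p14 p33 p44 : ℝ) :
    ∀ x : Fin 4 → ℝ,
      x ⬝ᵥ (Matrix.of ![![p11, 0, 0, p14], ![0, 2 * p33, 0, 0],
        ![0, 0, p33, 0], ![p14, 0, 0, p44]]).mulVec (mlsQ x) = 0 := by
  intro x
  simp [mlsQ, dotProduct, mulVec, Fin.sum_univ_four, Matrix.vecHead, Matrix.vecTail]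
  ring
end

section
/- Let S ≻ 0 be symmetric, L ∈ ℝ^{n×n} with S L + Lᵀ S ≺ 0, c ∈ ℝⁿ, and let Q be a quadratic nonlinearity with yᵀ S Q(y) = 0 for all y. Then there exists R > 0 such that for every y with ‖y‖ ≥ R, the derivative of V(y) = yᵀ S y along the vector field f(y) = L y + Q(y) + c is strictly negative: 2 yᵀ S f(y) < 0. -/
/-! The lossless condition removes the cubic term of `2 yᵀ S f(y)`, leaving
`yᵀ (S L + Lᵀ S) y + 2 yᵀ S c ≤ -μ ‖y‖² + 2 ‖S c‖ ‖y‖`, where `μ > 0` is the minimum of the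
positive definite form `-(S L + Lᵀ S)` on the unit sphere. This is negative once
`‖y‖ > 2 ‖S c‖ / μ`. -/

open Matrix

/-- The quadratic nonlinearity `Q(x)ᵢ = xᵀ Qᵢ x`. -/
def quadNL {n : ℕ} (Qm : Fin n → Matrix (Fin n) (Fin n) ℝ) (x : Fin n → ℝ) :
    Fin n → ℝ := fun i => x ⬝ᵥ (Qm i).mulVec x

theorem exists_pos_mul_norm_sq_le_of_homogeneous {E : Type*} [NormedAddCommGroup E]
    [NormedSpace ℝ E] [ProperSpace E] {q : E → ℝ} (hq : Continuous q)
    (hsmul : ∀ (t : ℝ) (x : E), q (t • x) = t ^ 2 * q x) (hpos : ∀ x ≠ 0, 0 < q x) :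
    ∃ μ > 0, ∀ x, μ * ‖x‖ ^ 2 ≤ q x := by
  obtain ⟨μ, hμ, hμle⟩ := (isCompact_sphere (0 : E) 1).exists_forall_le' hq.continuousOn
    fun u hu => hpos u (ne_zero_of_mem_unit_sphere ⟨u, hu⟩)
  refine ⟨μ, hμ, fun x => ?_⟩
  rcases eq_or_ne x 0 with rfl | hx
  · have hq0 : q 0 = 0 := by simpa using hsmul 0 0
    simp [hq0]
  · have hu : ‖x‖⁻¹ • x ∈ Metric.sphere (0 : E) 1 := by
      simp [norm_smul, hx]
    calc μ * ‖x‖ ^ 2 ≤ q (‖x‖⁻¹ • x) * ‖x‖ ^ 2 := by gcongr; exact hμle _ hu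
      _ = q x := by
        rw [hsmul, inv_pow, mul_comm, ← mul_assoc, mul_inv_cancel₀ (by positivity), one_mul]

theorem Matrix.dotProduct_le_sqrt_mul_sqrt {ι : Type*} [Fintype ι] (x y : ι → ℝ) :
    x ⬝ᵥ y ≤ √(x ⬝ᵥ x) * √(y ⬝ᵥ y) := by
  simpa only [dotProduct, sq] using Real.sum_mul_le_sqrt_mul_sqrt Finset.univ x y

theorem Matrix.PosDef.exists_pos_mul_dotProduct_self_le {ι : Type*} [Fintype ι]
    {M : Matrix ι ι ℝ} (hM : M.PosDef) :
    ∃ μ > 0, ∀ x : ι → ℝ, μ * (x ⬝ᵥ x) ≤ x ⬝ᵥ M *ᵥ x := by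
  obtain ⟨μ, hμ, hle⟩ := exists_pos_mul_norm_sq_le_of_homogeneous
    (q := fun x : EuclideanSpace ℝ ι => x.ofLp ⬝ᵥ M *ᵥ x.ofLp) (by fun_prop)
    (fun t x => by
      simp only [WithLp.ofLp_smul, mulVec_smul, dotProduct_smul, smul_dotProduct, smul_eq_mul]
      ring)
    (fun x hx => hM.dotProduct_mulVec_pos (by simpa using hx))
  refine ⟨μ, hμ, fun x => ?_⟩
  have hx := hle (WithLp.toLp 2 x)
  rw [EuclideanSpace.real_norm_sq_eq] at hx
  simpa [dotProduct, sq] using hx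

theorem Matrix.dotProduct_mulVec_mul_add_transpose_mul {ι R : Type*} [Fintype ι] [CommRing R]
    {S : Matrix ι ι R} (hS : Sᵀ = S) (L : Matrix ι ι R) (y : ι → R) :
    y ⬝ᵥ (S * L + Lᵀ * S) *ᵥ y = 2 * (y ⬝ᵥ S *ᵥ (L *ᵥ y)) := by
  have hLS : y ⬝ᵥ Lᵀ *ᵥ (S *ᵥ y) = y ⬝ᵥ S *ᵥ (L *ᵥ y) := by
    rw [dotProduct_mulVec, vecMul_transpose, dotProduct_comm, dotProduct_mulVec y S,
      ← mulVec_transpose, hS]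
  rw [add_mulVec, dotProduct_add, ← mulVec_mulVec, ← mulVec_mulVec, hLS, two_mul]

theorem stmt_18_general {n : ℕ} (S L : Matrix (Fin n) (Fin n) ℝ) (hS : S.PosDef)
    (hSL : (-(S * L + Lᵀ * S)).PosDef) (c : Fin n → ℝ)
    (Qm : Fin n → Matrix (Fin n) (Fin n) ℝ)
    (hloss : ∀ y : Fin n → ℝ, y ⬝ᵥ S.mulVec (quadNL Qm y) = 0) :
    ∃ R : ℝ, 0 < R ∧ ∀ y : Fin n → ℝ, R ≤ Real.sqrt (y ⬝ᵥ y) →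
      2 * (y ⬝ᵥ S.mulVec (L.mulVec y + quadNL Qm y + c)) < 0 := by
  obtain ⟨μ, hμ, hdecay⟩ := hSL.exists_pos_mul_dotProduct_self_le
  have hSsymm : Sᵀ = S := by simpa using hS.isHermitian.eq
  set K := √(S *ᵥ c ⬝ᵥ S *ᵥ c)
  refine ⟨2 * K / μ + 1, by positivity, fun y hy => ?_⟩
  set t := √(y ⬝ᵥ y)
  have hyy : y ⬝ᵥ y = t ^ 2 := (Real.sq_sqrt (dotProduct_self_star_nonneg y)).symm
  have hquad : μ * t ^ 2 ≤ -(2 * (y ⬝ᵥ S *ᵥ (L *ᵥ y))) := by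
    simpa only [hyy, neg_mulVec, dotProduct_neg, dotProduct_mulVec_mul_add_transpose_mul hSsymm]
      using hdecay y
  have hlin : y ⬝ᵥ S *ᵥ c ≤ t * K := dotProduct_le_sqrt_mul_sqrt y (S *ᵥ c)
  have hlarge : 2 * K < μ * t := by
    rw [← div_lt_iff₀' hμ]
    linarith
  have ht : 0 < t := lt_of_lt_of_le (by positivity) hy
  rw [mulVec_add, mulVec_add, dotProduct_add, dotProduct_add, hloss y, add_zero]
  nlinarith

theorem stmt_18 {n : ℕ} (S L : Matrix (Fin n) (Fin n) ℝ) (hS : S.PosDef)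
    (hSL : (-(S * L + Lᵀ * S)).PosDef) (c : Fin n → ℝ)
    (Qm : Fin n → Matrix (Fin n) (Fin n) ℝ) (hQsym : ∀ i, (Qm i).IsSymm)
    (hloss : ∀ y : Fin n → ℝ, y ⬝ᵥ S.mulVec (quadNL Qm y) = 0) :
    ∃ R : ℝ, 0 < R ∧ ∀ y : Fin n → ℝ, R ≤ Real.sqrt (y ⬝ᵥ y) →
      2 * (y ⬝ᵥ S.mulVec (L.mulVec y + quadNL Qm y + c)) < 0 :=
  stmt_18_general S L hS hSL c Qm hloss
end
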